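/- For every positive integer d, every μ ∈ ℂ and every s > 0, the change of variables ζ = coth(t) gives the identity I₀(μ,s) = ∫₄^∞ e^{−s·ζ}·(ζ²−1)^{(d−2)/2}·(1 + 2/(ζ−1))^{μ/2} dζ, where both integrals converge absolutely. -/

import Mathlib

/-!
Substitute `ζ = coth t`. It maps `(0, h)` decreasingly onto `(coth h, ∞) = (4, ∞)` with
`|dζ/dt| = 1 / sinh² t`, and since `ζ² - 1 = 1 / sinh² t` and `1 + 2 / (ζ - 1) = e^{2t}`, the
Jacobian times the `ζ`-integrand is exactly the `t`-integrand, so the one-dimensional change of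
variables formula transfers both integrability and the value of the integral. Integrability on the
`t`-side holds because `coth t ≥ 1 / sinh t`, so `e^{-s coth t} / sinh^d t ≤ e^{-s u} u^d` with
`u = 1 / sinh t`, which is at most `d! / s^d`.
-/

open MeasureTheory

noncomputable def hconst : ℝ := (1/2) * Real.log (5/3)

noncomputable def cothR (t : ℝ) : ℝ := Real.cosh t / Real.sinh t

/-- `a ^ z := exp (z * log a)` for a real base `a > 0` and complex exponent `z`. -/
noncomputable def cpowR (a : ℝ) (z : ℂ) : ℂ := Complex.exp (z * Real.log a)

noncomputable def I0 (d : ℕ) (μ : ℂ) (s : ℝ) : ℂ :=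
  ∫ t in Set.Ioo (0:ℝ) hconst,
    Complex.exp (-(s:ℂ) * (cothR t : ℂ) + μ * (t:ℂ)) / ((Real.sinh t : ℂ))^d

open Real Set

theorem cothR_sq_sub_one {t : ℝ} (ht : sinh t ≠ 0) : cothR t ^ 2 - 1 = (sinh t ^ 2)⁻¹ := by
  rw [cothR, div_pow, cosh_sq]
  field_simp
  ring

theorem cothR_sub_one {t : ℝ} (ht : sinh t ≠ 0) : cothR t - 1 = exp (-t) / sinh t := by
  rw [cothR, ← cosh_sub_sinh]
  field_simp

theorem one_lt_cothR {t : ℝ} (ht : 0 < t) : 1 < cothR t := by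
  have hsinh : 0 < sinh t := sinh_pos_iff.2 ht
  rw [← sub_pos, cothR_sub_one hsinh.ne']
  exact div_pos (exp_pos _) hsinh

theorem one_add_two_div_cothR_sub_one {t : ℝ} (ht : t ≠ 0) :
    1 + 2 / (cothR t - 1) = exp (2 * t) := by
  have hsinh : sinh t ≠ 0 := sinh_ne_zero.2 ht
  rw [cothR_sub_one hsinh, div_div_eq_mul_div, sinh_eq, exp_neg,
    show 2 * t = t + t by ring, exp_add]
  field_simp
  ring

theorem cothR_eq_of_exp_two_mul_eq {t ζ : ℝ} (ht : t ≠ 0)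
    (h : exp (2 * t) = 1 + 2 / (ζ - 1)) : cothR t = ζ := by
  rw [← one_add_two_div_cothR_sub_one ht, add_right_inj] at h
  have := congrArg (2 / ·) h
  simp only [div_div_cancel₀ (two_ne_zero' ℝ)] at this
  linarith

theorem inv_sinh_le_cothR {t : ℝ} (ht : 0 < t) : (sinh t)⁻¹ ≤ cothR t := by
  rw [cothR, div_eq_mul_inv]
  exact le_mul_of_one_le_left (inv_pos.2 (sinh_pos_iff.2 ht)).le (one_le_cosh t)

theorem hasDerivAt_cothR {t : ℝ} (ht : sinh t ≠ 0) :
    HasDerivAt cothR (-(sinh t ^ 2)⁻¹) t := by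
  refine ((hasDerivAt_cosh t).div (hasDerivAt_sinh t) ht).congr_deriv ?_
  field_simp
  linear_combination -(cosh_sq t)

theorem hasDerivWithinAt_cothR_Ioo {a t : ℝ} (ht : t ∈ Ioo 0 a) :
    HasDerivWithinAt cothR (-(sinh t ^ 2)⁻¹) (Ioo 0 a) t :=
  (hasDerivAt_cothR (sinh_pos_iff.2 ht.1).ne').hasDerivWithinAt

theorem strictAntiOn_cothR : StrictAntiOn cothR (Ioi 0) := by
  have hsinh : ∀ t ∈ Ioi (0 : ℝ), 0 < sinh t := fun _ ht ↦ sinh_pos_iff.2 ht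
  exact strictAntiOn_of_hasDerivWithinAt_neg (convex_Ioi 0)
    (fun t ht ↦ (hasDerivAt_cothR (hsinh t ht).ne').continuousAt.continuousWithinAt)
    (fun t ht ↦ (hasDerivAt_cothR (hsinh t (interior_subset ht)).ne').hasDerivWithinAt)
    (fun t ht ↦ neg_neg_of_pos (inv_pos.2 (pow_pos (hsinh t (interior_subset ht)) 2)))

theorem image_cothR_Ioo {a : ℝ} (ha : 0 < a) : cothR '' Ioo 0 a = Ioi (cothR a) := by
  ext ζ
  constructor
  · rintro ⟨t, ht, rfl⟩
    exact strictAntiOn_cothR ht.1 ha ht.2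
  · intro (hζ : cothR a < ζ)
    have hζ1 : 1 < ζ := (one_lt_cothR ha).trans hζ
    have hr : 1 < 1 + 2 / (ζ - 1) := lt_add_of_pos_right 1 (div_pos two_pos (by linarith))
    set t := log (1 + 2 / (ζ - 1)) / 2
    have ht : 0 < t := half_pos (log_pos hr)
    have hcoth : cothR t = ζ := cothR_eq_of_exp_two_mul_eq ht.ne'
      (by rw [mul_div_cancel₀ _ two_ne_zero, exp_log (by linarith)])
    refine ⟨t, ⟨ht, ?_⟩, hcoth⟩
    by_contra! hat
    have := strictAntiOn_cothR.antitoneOn ha ht hat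
    linarith

theorem hconst_pos : 0 < hconst := mul_pos one_half_pos (log_pos (by norm_num))

theorem cothR_hconst : cothR hconst = 4 :=
  cothR_eq_of_exp_two_mul_eq hconst_pos.ne' <| by
    rw [hconst, ← mul_assoc, mul_one_div_cancel two_ne_zero, one_mul, exp_log (by norm_num)]
    norm_num

theorem exp_neg_mul_mul_pow_le {s u : ℝ} (hs : 0 < s) (hu : 0 ≤ u) (d : ℕ) :
    exp (-(s * u)) * u ^ d ≤ d.factorial / s ^ d := by
  have h := pow_div_factorial_le_exp _ (mul_nonneg hs.le hu) d
  rw [div_le_iff₀ (by positivity), mul_pow] at h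
  rw [exp_neg, inv_mul_le_iff₀ (exp_pos _), ← mul_div_assoc, le_div_iff₀ (by positivity)]
  linarith

theorem cpowR_exp (x : ℝ) (z : ℂ) : cpowR (exp x) z = Complex.exp (z * x) := by
  rw [cpowR, log_exp]

theorem inv_sq_mul_inv_sq_rpow {a : ℝ} (ha : 0 < a) (x : ℝ) :
    (a ^ 2)⁻¹ * ((a ^ 2)⁻¹) ^ ((x - 2) / 2) = (a ^ x)⁻¹ := by
  have hsq : (a ^ 2)⁻¹ = a ^ (-2 : ℝ) := by
    rw [rpow_neg ha.le, ← rpow_natCast]; norm_num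
  rw [hsq, ← rpow_mul ha.le, ← rpow_add ha, ← rpow_neg ha.le]
  ring_nf

section Integrands

variable (d : ℕ) (μ : ℂ) (s : ℝ)

noncomputable def tIntegrand (t : ℝ) : ℂ :=
  Complex.exp (-(s : ℂ) * (cothR t : ℂ) + μ * (t : ℂ)) / (sinh t : ℂ) ^ d

noncomputable def zetaIntegrand (ζ : ℝ) : ℂ :=
  Complex.exp (-(s : ℂ) * (ζ : ℂ)) * (((ζ ^ 2 - 1) ^ (((d : ℝ) - 2) / 2) : ℝ) : ℂ) *
    cpowR (1 + 2 / (ζ - 1)) (μ / 2)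

theorem abs_deriv_cothR_smul_zetaIntegrand {t : ℝ} (ht : 0 < t) :
    |-(sinh t ^ 2)⁻¹| • zetaIntegrand d μ s (cothR t) = tIntegrand d μ s t := by
  have hsinh : 0 < sinh t := sinh_pos_iff.2 ht
  have hweight : |-(sinh t ^ 2)⁻¹| * (cothR t ^ 2 - 1) ^ (((d : ℝ) - 2) / 2) =
      (sinh t ^ d)⁻¹ := by
    rw [abs_neg, abs_of_pos (by positivity), cothR_sq_sub_one hsinh.ne',
      inv_sq_mul_inv_sq_rpow hsinh, rpow_natCast]
  rw [zetaIntegrand, tIntegrand, one_add_two_div_cothR_sub_one ht.ne', cpowR_exp,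
    Complex.real_smul, Complex.exp_add, ← Complex.ofReal_pow,
    div_eq_mul_inv _ ((sinh t ^ d : ℝ) : ℂ), ← Complex.ofReal_inv, ← hweight,
    Complex.ofReal_mul]
  push_cast
  rw [show μ / 2 * (2 * (t : ℂ)) = μ * t by ring]
  ring

theorem measurable_tIntegrand : Measurable (tIntegrand d μ s) := by
  unfold tIntegrand cothR
  fun_prop

theorem norm_tIntegrand_le {a t : ℝ} (hs : 0 < s) (ht : t ∈ Ioo 0 a) :
    ‖tIntegrand d μ s t‖ ≤ exp (|μ.re| * a) * (d.factorial / s ^ d) := by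
  have hsinh : 0 < sinh t := sinh_pos_iff.2 ht.1
  have hre : (-(s : ℂ) * (cothR t : ℂ) + μ * (t : ℂ)).re = -(s * cothR t) + μ.re * t := by
    simp
  have hexp : -(s * cothR t) + μ.re * t ≤ |μ.re| * a + -(s * (sinh t)⁻¹) := by
    have := mul_le_mul_of_nonneg_left (inv_sinh_le_cothR ht.1) hs.le
    have := mul_le_mul (le_abs_self μ.re) ht.2.le ht.1.le (abs_nonneg _)
    linarith
  calc ‖tIntegrand d μ s t‖ = exp (-(s * cothR t) + μ.re * t) * (sinh t)⁻¹ ^ d := by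
        rw [tIntegrand, norm_div, Complex.norm_exp, hre, norm_pow, Complex.norm_real,
          norm_of_nonneg hsinh.le, inv_pow, div_eq_mul_inv]
    _ ≤ exp (|μ.re| * a) * (exp (-(s * (sinh t)⁻¹)) * (sinh t)⁻¹ ^ d) := by
        rw [← mul_assoc, ← exp_add]
        gcongr
    _ ≤ exp (|μ.re| * a) * (d.factorial / s ^ d) := by
        gcongr
        exact exp_neg_mul_mul_pow_le hs (inv_pos.2 hsinh).le d

theorem integrableOn_tIntegrand (hs : 0 < s) (a : ℝ) :
    IntegrableOn (tIntegrand d μ s) (Ioo 0 a) :=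
  .of_bound measure_Ioo_lt_top (measurable_tIntegrand d μ s).aestronglyMeasurable _
    (ae_restrict_of_forall_mem measurableSet_Ioo fun _ ht ↦ norm_tIntegrand_le d μ s hs ht)

theorem integrableOn_zetaIntegrand_Ioi_cothR {a : ℝ} (hs : 0 < s) (ha : 0 < a) :
    IntegrableOn (zetaIntegrand d μ s) (Ioi (cothR a)) := by
  rw [← image_cothR_Ioo ha, integrableOn_image_iff_integrableOn_abs_deriv_smul measurableSet_Ioo
    (fun _ ↦ hasDerivWithinAt_cothR_Ioo) (strictAntiOn_cothR.injOn.mono Ioo_subset_Ioi_self)]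
  exact (integrableOn_tIntegrand d μ s hs a).congr_fun
    (fun _ ht ↦ (abs_deriv_cothR_smul_zetaIntegrand d μ s ht.1).symm) measurableSet_Ioo

theorem setIntegral_tIntegrand_Ioo {a : ℝ} (ha : 0 < a) :
    ∫ t in Ioo 0 a, tIntegrand d μ s t = ∫ ζ in Ioi (cothR a), zetaIntegrand d μ s ζ := by
  rw [← image_cothR_Ioo ha, integral_image_eq_integral_abs_deriv_smul measurableSet_Ioo
    (fun _ ↦ hasDerivWithinAt_cothR_Ioo) (strictAntiOn_cothR.injOn.mono Ioo_subset_Ioi_self)]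
  exact setIntegral_congr_fun measurableSet_Ioo
    (fun _ ht ↦ (abs_deriv_cothR_smul_zetaIntegrand d μ s ht.1).symm)

end Integrands

theorem stmt4_general (d : ℕ) (μ : ℂ) (s : ℝ) (hs : 0 < s) :
    IntegrableOn
      (fun t : ℝ => Complex.exp (-(s:ℂ) * (cothR t : ℂ) + μ * (t:ℂ)) / ((Real.sinh t : ℂ))^d)
      (Set.Ioo (0:ℝ) hconst) ∧
    IntegrableOn
      (fun ζ : ℝ => Complex.exp (-(s:ℂ) * (ζ:ℂ))
        * (((ζ^2 - 1) ^ (((d:ℝ) - 2)/2) : ℝ) : ℂ) * cpowR (1 + 2/(ζ - 1)) (μ/2))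
      (Set.Ioi (4:ℝ)) ∧
    I0 d μ s = ∫ ζ in Set.Ioi (4:ℝ), Complex.exp (-(s:ℂ) * (ζ:ℂ))
        * (((ζ^2 - 1) ^ (((d:ℝ) - 2)/2) : ℝ) : ℂ) * cpowR (1 + 2/(ζ - 1)) (μ/2) := by
  rw [← cothR_hconst]
  exact ⟨integrableOn_tIntegrand d μ s hs hconst,
    integrableOn_zetaIntegrand_Ioi_cothR d μ s hs hconst_pos,
    setIntegral_tIntegrand_Ioo d μ s hconst_pos⟩

theorem stmt4 (d : ℕ) (hd : 0 < d) (μ : ℂ) (s : ℝ) (hs : 0 < s) :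
    IntegrableOn
      (fun t : ℝ => Complex.exp (-(s:ℂ) * (cothR t : ℂ) + μ * (t:ℂ)) / ((Real.sinh t : ℂ))^d)
      (Set.Ioo (0:ℝ) hconst) ∧
    IntegrableOn
      (fun ζ : ℝ => Complex.exp (-(s:ℂ) * (ζ:ℂ))
        * (((ζ^2 - 1) ^ (((d:ℝ) - 2)/2) : ℝ) : ℂ) * cpowR (1 + 2/(ζ - 1)) (μ/2))
      (Set.Ioi (4:ℝ)) ∧
    I0 d μ s = ∫ ζ in Set.Ioi (4:ℝ), Complex.exp (-(s:ℂ) * (ζ:ℂ))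
        * (((ζ^2 - 1) ^ (((d:ℝ) - 2)/2) : ℝ) : ℂ) * cpowR (1 + 2/(ζ - 1)) (μ/2) :=
  stmt4_general d μ s hs
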